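/- Let H be a Hermitian d×d matrix with spectral projections P_E of ranks d_E, let ρ be a d×d density matrix, let ψ ∈ ℂ^d be a unit vector with q_E = ‖P_E ψ‖², and set ρ_{E,E'} = P_E ρ P_{E'}. Suppose ρ is block positive: there exist orthonormal bases {φ_{E,1}, …, φ_{E,d_E}} of the eigenspaces of H such that, for every pair of eigenvalues E, E', the entries ⟨φ_{E,k}, ρ φ_{E',l}⟩ vanish whenever k > min(d_E, d_{E'}) or l > min(d_E, d_{E'}), and the square matrix [⟨φ_{E,k}, ρ φ_{E',l}⟩] for k, l ≤ min(d_E, d_{E'}) is positive semidefinite. Then there exists a quantum channel ℳ whose Kraus operators all commute with H and which attains ⟨ψ| ℳ(ρ) |ψ⟩ = ∑_{E,E'} √(q_E q_{E'}) · ‖ρ_{E,E'}‖₁, where ‖X‖₁ = Tr[√(X†X)]. -/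

import Mathlib

open Matrix
open scoped ComplexOrder

/-- `wt P v = ‖P v‖²`, the weight of the vector `v` on the range of `P`. -/
noncomputable def wt {d : ℕ} (P : Matrix (Fin d) (Fin d) ℂ) (v : Fin d → ℂ) : ℝ :=
  (star (P *ᵥ v) ⬝ᵥ (P *ᵥ v)).re

/-- The trace norm `‖X‖₁ = Tr[√(Xᴴ X)]`. -/
noncomputable def traceNorm {d : ℕ} (X : Matrix (Fin d) (Fin d) ℂ) : ℝ :=
  (((Matrix.posSemidef_conjTranspose_mul_self X).1.eigenvectorUnitary : Matrix (Fin d) (Fin d) ℂ) *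
    diagonal (RCLike.ofReal ∘ Real.sqrt ∘ (Matrix.posSemidef_conjTranspose_mul_self X).1.eigenvalues) *
    (star (Matrix.posSemidef_conjTranspose_mul_self X).1.eigenvectorUnitary : Matrix (Fin d) (Fin d) ℂ)).trace.re

/-
The channel is built from unit vectors `χ_E ∈ ran P_E` with `⟨ψ, χ_E⟩ = √q_E` (the normalized
`P_E ψ`, or any unit vector of the eigenspace when `P_E ψ = 0`) and the Kraus operators
`M_k = ∑_E |χ_E⟩⟨φ_{E,k}|`, with `φ_{E,k} = 0` for `k ≥ d_E`. Each term maps the `E`-eigenspace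
into itself, so `M_k` commutes with `H`; orthonormality of the `χ_E` gives
`∑_k M_k† M_k = ∑_E P_E = 1`; and `⟨ψ|ℳ(ρ)|ψ⟩ = ∑_{E,E'} √(q_E q_{E'}) ∑_k ⟨φ_{E,k}, ρ φ_{E',k}⟩`.
By block positivity the inner sum is the trace of the positive block `R` of `ρ`, and
`P_E ρ P_{E'} = G R F†` with isometries `G`, `F`, so `|P_E ρ P_{E'}| = F R F†` also has trace `Tr R`.
-/

section TraceNorm

open scoped MatrixOrder

variable {d : ℕ}

theorem traceNorm_eq_re_trace_sqrt (X : Matrix (Fin d) (Fin d) ℂ) :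
    traceNorm X = (CFC.sqrt (Xᴴ * X)).trace.re := by
  have hX := posSemidef_conjTranspose_mul_self X
  rw [traceNorm, CFC.sqrt_eq_cfc, cfc_nnreal_eq_real _ _ hX.nonneg, hX.1.cfc_eq, IsHermitian.cfc,
    Unitary.conjStarAlgAut_apply]
  congr 5
  funext k
  simp [max_eq_left (hX.eigenvalues_nonneg k)]

theorem traceNorm_eq_re_trace_of_conjTranspose_mul_self_eq_sq {X S : Matrix (Fin d) (Fin d) ℂ}
    (hS : S.PosSemidef) (hXS : Xᴴ * X = S ^ 2) : traceNorm X = S.trace.re := by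
  rw [traceNorm_eq_re_trace_sqrt, hXS, CFC.sqrt_sq S hS.nonneg]

theorem traceNorm_mul_mul_conjTranspose {κ : Type*} [Fintype κ] [DecidableEq κ]
    {G F : Matrix (Fin d) κ ℂ} (hG : Gᴴ * G = 1) (hF : Fᴴ * F = 1) {R : Matrix κ κ ℂ}
    (hR : R.PosSemidef) : traceNorm (G * R * Fᴴ) = R.trace.re := by
  have hsq : (G * R * Fᴴ)ᴴ * (G * R * Fᴴ) = (F * R * Fᴴ) ^ 2 := by
    simp only [conjTranspose_mul, conjTranspose_conjTranspose, hR.1.eq, pow_two, Matrix.mul_assoc]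
    rw [← Matrix.mul_assoc Gᴴ G, hG, ← Matrix.mul_assoc Fᴴ F, hF, Matrix.one_mul]
  rw [traceNorm_eq_re_trace_of_conjTranspose_mul_self_eq_sq (hR.mul_mul_conjTranspose_same F) hsq,
    trace_mul_cycle, hF, Matrix.one_mul]

end TraceNorm

theorem mul_mul_eq_submatrix_mul_mul {α l p q r p' q' : Type*} [NonUnitalNonAssocSemiring α]
    [Fintype p] [Fintype q] [Fintype p'] [Fintype q'] (B : Matrix l p α) (X : Matrix p q α)
    (C : Matrix q r α) {e : p' → p} {f : q' → q} (he : Function.Injective e)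
    (hf : Function.Injective f) (hXe : ∀ k ∉ Set.range e, ∀ l, X k l = 0)
    (hXf : ∀ k, ∀ l ∉ Set.range f, X k l = 0) :
    B * X * C = B.submatrix id e * X.submatrix e f * C.submatrix f id := by
  ext a b
  simp only [mul_apply, submatrix_apply, id]
  symm
  refine Fintype.sum_of_injective f hf _ _ (fun y hy => by simp [hXf _ y hy]) fun y => ?_
  congr 1
  exact Fintype.sum_of_injective e he _ _ (fun x hx => by simp [hXe x hx]) fun _ => rfl

section OrthonormalFamily

/-! `(of u)ᵀ` is the `n × κ` matrix whose columns are the vectors `u k`. -/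

variable {n κ : Type*} [Fintype n]

def IsOrthonormal [DecidableEq κ] (u : κ → n → ℂ) : Prop :=
  ∀ k l, star (u k) ⬝ᵥ u l = if k = l then 1 else 0

theorem IsOrthonormal.comp [DecidableEq κ] {κ' : Type*} [DecidableEq κ'] {u : κ → n → ℂ}
    (hu : IsOrthonormal u) {e : κ' → κ} (he : Function.Injective e) : IsOrthonormal (u ∘ e) :=
  fun k l => by simpa [he.eq_iff] using hu (e k) (e l)

theorem IsOrthonormal.conjTranspose_mul_self [DecidableEq κ] {u : κ → n → ℂ}
    (hu : IsOrthonormal u) : ((of u)ᵀ)ᴴ * (of u)ᵀ = 1 := by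
  ext k l
  simpa [mul_apply, dotProduct, one_apply] using hu k l

theorem IsOrthonormal.sum_vecMulVec_mulVec [Fintype κ] [DecidableEq κ] {u : κ → n → ℂ}
    (hu : IsOrthonormal u) (l : κ) : (∑ k, vecMulVec (u k) (star (u k))) *ᵥ u l = u l := by
  simp [sum_mulVec, vecMulVec_mulVec, fun k => hu k l]

omit [Fintype n] in
theorem mul_conjTranspose_self_eq_sum_vecMulVec [Fintype κ] (u : κ → n → ℂ) :
    (of u)ᵀ * ((of u)ᵀ)ᴴ = ∑ k, vecMulVec (u k) (star (u k)) := by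
  ext x y
  simp [mul_apply, Matrix.sum_apply, vecMulVec_apply]

theorem conjTranspose_mul_mul_apply {κ' : Type*} (u : κ → n → ℂ) (ρ : Matrix n n ℂ)
    (v : κ' → n → ℂ) (k : κ) (l : κ') :
    (((of u)ᵀ)ᴴ * ρ * (of v)ᵀ) k l = star (u k) ⬝ᵥ (ρ *ᵥ v l) := by
  simp only [mul_apply, conjTranspose_apply, transpose_apply, of_apply, dotProduct, mulVec,
    Pi.star_apply, Finset.mul_sum, Finset.sum_mul, mul_assoc]
  exact Finset.sum_comm

end OrthonormalFamily

section Blocks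

variable {d a b m : ℕ} {u : Fin a → Fin d → ℂ} {v : Fin b → Fin d → ℂ}

theorem mul_mul_eq_block (ha : m ≤ a) (hb : m ≤ b) (ρ : Matrix (Fin d) (Fin d) ℂ)
    (hvanish : ∀ (k : Fin a) (l : Fin b), m ≤ (k : ℕ) ∨ m ≤ (l : ℕ) →
      star (u k) ⬝ᵥ (ρ *ᵥ v l) = 0) :
    (∑ k, vecMulVec (u k) (star (u k))) * ρ * ∑ l, vecMulVec (v l) (star (v l)) =
      (of (u ∘ Fin.castLE ha))ᵀ *
        (of fun k l : Fin m => star (u (Fin.castLE ha k)) ⬝ᵥ (ρ *ᵥ v (Fin.castLE hb l))) *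
        ((of (v ∘ Fin.castLE hb))ᵀ)ᴴ := by
  have hrange : ∀ {c : ℕ} (hc : m ≤ c) (k : Fin c), k ∉ Set.range (Fin.castLE hc) → m ≤ (k : ℕ) :=
    fun hc k hk => by simpa [Fin.range_castLE] using hk
  rw [← mul_conjTranspose_self_eq_sum_vecMulVec, ← mul_conjTranspose_self_eq_sum_vecMulVec]
  calc (of u)ᵀ * ((of u)ᵀ)ᴴ * ρ * ((of v)ᵀ * ((of v)ᵀ)ᴴ)
      = (of u)ᵀ * (((of u)ᵀ)ᴴ * ρ * (of v)ᵀ) * ((of v)ᵀ)ᴴ := by simp only [Matrix.mul_assoc]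
    _ = _ := by
      rw [mul_mul_eq_submatrix_mul_mul _ _ _ (Fin.castLE_injective ha) (Fin.castLE_injective hb)
        (fun k hk l => by rw [conjTranspose_mul_mul_apply, hvanish k l (Or.inl (hrange ha k hk))])
        (fun k l hl => by rw [conjTranspose_mul_mul_apply, hvanish k l (Or.inr (hrange hb l hl))])]
      congr 2
      ext k l
      exact conjTranspose_mul_mul_apply u ρ v _ _

theorem ofReal_traceNorm_mul_mul_eq_trace (hu : IsOrthonormal u) (hv : IsOrthonormal v)
    (ha : m ≤ a) (hb : m ≤ b) {P Q ρ : Matrix (Fin d) (Fin d) ℂ}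
    (hP : P = ∑ k, vecMulVec (u k) (star (u k))) (hQ : Q = ∑ l, vecMulVec (v l) (star (v l)))
    (hvanish : ∀ (k : Fin a) (l : Fin b), m ≤ (k : ℕ) ∨ m ≤ (l : ℕ) →
      star (u k) ⬝ᵥ (ρ *ᵥ v l) = 0)
    (hR : (of fun k l : Fin m =>
      star (u (Fin.castLE ha k)) ⬝ᵥ (ρ *ᵥ v (Fin.castLE hb l))).PosSemidef) :
    (traceNorm (P * ρ * Q) : ℂ) =
      (of fun k l : Fin m => star (u (Fin.castLE ha k)) ⬝ᵥ (ρ *ᵥ v (Fin.castLE hb l))).trace := by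
  rw [hP, hQ, mul_mul_eq_block ha hb ρ hvanish,
    traceNorm_mul_mul_conjTranspose ((hu.comp (Fin.castLE_injective ha)).conjTranspose_mul_self)
      ((hv.comp (Fin.castLE_injective hb)).conjTranspose_mul_self) hR]
  exact (Complex.eq_re_of_ofReal_le hR.trace_nonneg).symm

end Blocks

section PadZero

variable {α : Type*} [Zero α] {m : ℕ}

def padZero (N : ℕ) (v : Fin m → α) : Fin N → α :=
  fun k => if h : (k : ℕ) < m then v ⟨k, h⟩ else 0

theorem padZero_of_lt {N : ℕ} (v : Fin m → α) {k : Fin N} (hk : (k : ℕ) < m) :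
    padZero N v k = v ⟨k, hk⟩ :=
  dif_pos hk

theorem padZero_of_le {N : ℕ} (v : Fin m → α) {k : Fin N} (hk : m ≤ (k : ℕ)) :
    padZero N v k = 0 :=
  dif_neg hk.not_gt

theorem lt_of_padZero_ne_zero {N : ℕ} {v : Fin m → α} {k : Fin N} (hk : padZero N v k ≠ 0) :
    (k : ℕ) < m :=
  lt_of_not_ge fun h => hk (padZero_of_le v h)

theorem mulVec_padZero {n : Type*} [Fintype n] {N : ℕ} (A : Matrix n n ℂ) (v : Fin m → n → ℂ)
    (k : Fin N) : A *ᵥ padZero N v k = padZero N (fun l => A *ᵥ v l) k := by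
  unfold padZero
  split_ifs <;> simp

theorem sum_comp_padZero {β : Type*} [AddCommMonoid β] {N : ℕ} (h : m ≤ N) (v : Fin m → α)
    {g : α → β} (hg : g 0 = 0) : ∑ k, g (padZero N v k) = ∑ k, g (v k) := by
  symm
  refine Fintype.sum_of_injective (Fin.castLE h) (Fin.castLE_injective h) _ _ (fun k hk => ?_)
    fun k => by rw [padZero_of_lt v (k := Fin.castLE h k) k.isLt]; rfl
  rw [Fin.range_castLE, Set.mem_ofPred_eq, not_lt] at hk
  rw [padZero_of_le v hk, hg]

end PadZero

theorem sum_padZero_dotProduct_mulVec_eq_trace {n : Type*} [Fintype n] {a b m N : ℕ}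
    (u : Fin a → n → ℂ) (v : Fin b → n → ℂ) (ha : m ≤ a) (hb : m ≤ b) (hN : m ≤ N)
    (ρ : Matrix n n ℂ)
    (hvanish : ∀ (k : Fin a) (l : Fin b), m ≤ (k : ℕ) ∨ m ≤ (l : ℕ) →
      star (u k) ⬝ᵥ (ρ *ᵥ v l) = 0) :
    ∑ k, star (padZero N u k) ⬝ᵥ (ρ *ᵥ padZero N v k) =
      (of fun k l : Fin m => star (u (Fin.castLE ha k)) ⬝ᵥ (ρ *ᵥ v (Fin.castLE hb l))).trace := by
  symm
  refine Fintype.sum_of_injective (Fin.castLE hN) (Fin.castLE_injective hN) _ _ (fun k hk => ?_)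
    fun k => ?_
  · rw [Fin.range_castLE, Set.mem_ofPred_eq, not_lt] at hk
    by_cases hka : (k : ℕ) < a
    · by_cases hkb : (k : ℕ) < b
      · rw [padZero_of_lt u hka, padZero_of_lt v hkb]
        exact hvanish _ _ (Or.inl hk)
      · rw [padZero_of_le v (not_lt.1 hkb), mulVec_zero, dotProduct_zero]
    · rw [padZero_of_le u (not_lt.1 hka), star_zero, zero_dotProduct]
  · rw [diag_apply, of_apply, padZero_of_lt u (k := Fin.castLE hN k) (k.isLt.trans_le ha),
      padZero_of_lt v (k := Fin.castLE hN k) (k.isLt.trans_le hb)]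
    rfl

section Projections

variable {n : Type*} [Fintype n]

theorem mulVec_eq_smul_of_mulVec_eq_self {ι : Type*} [Fintype ι] {P : ι → Matrix n n ℂ}
    (hOrth : ∀ i j, i ≠ j → P i * P j = 0) {H : Matrix n n ℂ} {E : ι → ℝ}
    (hSpec : H = ∑ i, (E i : ℂ) • P i) {i : ι} {v : n → ℂ} (hv : P i *ᵥ v = v) :
    H *ᵥ v = (E i : ℂ) • v := by
  rw [hSpec, sum_mulVec, Finset.sum_eq_single i (fun j _ hji => ?_) (by simp), smul_mulVec, hv]
  rw [smul_mulVec, ← hv, mulVec_mulVec, hOrth j i hji, zero_mulVec, smul_zero]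

theorem dotProduct_eq_zero_of_mul_eq_zero {P Q : Matrix n n ℂ} (hP : P.IsHermitian)
    (hPQ : P * Q = 0) {u v : n → ℂ} (hu : P *ᵥ u = u) (hv : Q *ᵥ v = v) : star u ⬝ᵥ v = 0 := by
  rw [← hu, ← hv, star_mulVec, ← dotProduct_mulVec, mulVec_mulVec, hP.eq, hPQ, zero_mulVec,
    dotProduct_zero]

end Projections

theorem ofReal_wt {d : ℕ} (P : Matrix (Fin d) (Fin d) ℂ) (v : Fin d → ℂ) :
    (wt P v : ℂ) = star (P *ᵥ v) ⬝ᵥ (P *ᵥ v) :=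
  (Complex.eq_re_of_ofReal_le (dotProduct_star_self_nonneg _)).symm

theorem wt_nonneg {d : ℕ} (P : Matrix (Fin d) (Fin d) ℂ) (v : Fin d → ℂ) : 0 ≤ wt P v :=
  (Complex.nonneg_iff.1 (dotProduct_star_self_nonneg (P *ᵥ v))).1

theorem exists_mulVec_eq_self_dotProduct_eq_sqrt_wt {d : ℕ} {P : Matrix (Fin d) (Fin d) ℂ}
    (hP : P.IsHermitian) (hPP : P * P = P) (ψ : Fin d → ℂ) :
    ∃ χ, P *ᵥ χ = χ ∧ ((∃ u, P *ᵥ u = u ∧ star u ⬝ᵥ u = 1) → star χ ⬝ᵥ χ = 1) ∧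
      star ψ ⬝ᵥ χ = (√(wt P ψ) : ℂ) := by
  have hψP : star ψ ⬝ᵥ (P *ᵥ ψ) = wt P ψ := by
    rw [ofReal_wt, star_mulVec, ← dotProduct_mulVec, mulVec_mulVec, hP.eq, hPP]
  by_cases h0 : wt P ψ = 0
  · have hPψ : P *ᵥ ψ = 0 := dotProduct_star_self_eq_zero.1 (by rw [← ofReal_wt, h0]; simp)
    have horth : ∀ u, P *ᵥ u = u → star ψ ⬝ᵥ u = 0 := fun u hu => by
      rw [← hu, dotProduct_mulVec, ← hP.eq, ← star_mulVec, hPψ, star_zero, zero_dotProduct]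
    by_cases hu : ∃ u, P *ᵥ u = u ∧ star u ⬝ᵥ u = 1
    · obtain ⟨u, hPu, hu1⟩ := hu
      exact ⟨u, hPu, fun _ => hu1, by rw [horth u hPu, h0]; simp⟩
    · exact ⟨0, mulVec_zero P, fun h => absurd h hu, by simp [h0]⟩
  have hq : ((√(wt P ψ) : ℝ) : ℂ) ≠ 0 :=
    Complex.ofReal_ne_zero.2 (Real.sqrt_pos.2 ((wt_nonneg P ψ).lt_of_ne' h0)).ne'
  have hsq : ((wt P ψ : ℝ) : ℂ) = ((√(wt P ψ) : ℝ) : ℂ) ^ 2 := by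
    rw [← Complex.ofReal_pow, Real.sq_sqrt (wt_nonneg P ψ)]
  refine ⟨((√(wt P ψ) : ℝ) : ℂ)⁻¹ • (P *ᵥ ψ), ?_, fun _ => ?_, ?_⟩
  · rw [mulVec_smul, mulVec_mulVec, hPP]
  · rw [star_smul, smul_dotProduct, dotProduct_smul, ← ofReal_wt, star_inv₀, Complex.star_def,
      Complex.conj_ofReal, smul_eq_mul, smul_eq_mul, hsq]
    field_simp
  · rw [dotProduct_smul, hψP, smul_eq_mul, hsq]
    field_simp

section Kraus

variable {n ι κ : Type*} [Fintype n] [Fintype ι]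

def krausOp (χ : ι → n → ℂ) (φ : ι → κ → n → ℂ) (k : κ) : Matrix n n ℂ :=
  ∑ i, vecMulVec (χ i) (star (φ i k))

theorem sum_conjTranspose_krausOp_mul_krausOp [Fintype κ] [DecidableEq ι] {χ : ι → n → ℂ}
    {φ : ι → κ → n → ℂ} (horth : ∀ i j, i ≠ j → star (χ i) ⬝ᵥ χ j = 0)
    (hunit : ∀ i k, φ i k ≠ 0 → star (χ i) ⬝ᵥ χ i = 1) :
    ∑ k, (krausOp χ φ k)ᴴ * krausOp χ φ k = ∑ i, ∑ k, vecMulVec (φ i k) (star (φ i k)) := by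
  have hterm : ∀ i j k, (vecMulVec (χ i) (star (φ i k)))ᴴ * vecMulVec (χ j) (star (φ j k)) =
      if i = j then vecMulVec (φ i k) (star (φ i k)) else 0 := by
    intro i j k
    rw [conjTranspose_vecMulVec, star_star, vecMulVec_mul_vecMulVec, vecMulVec_smul]
    split_ifs with hij
    · subst hij
      by_cases hi : φ i k = 0
      · simp [hi]
      · rw [hunit i k hi, one_smul]
    · rw [horth i j hij, zero_smul]
  simp only [krausOp, conjTranspose_sum, Finset.sum_mul, Finset.mul_sum, hterm,
    Finset.sum_ite_eq', Finset.mem_univ, if_true]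
  exact Finset.sum_comm

theorem commute_vecMulVec_star_of_mulVec_eq_smul {H : Matrix n n ℂ} (hH : H.IsHermitian)
    {v w : n → ℂ} {c : ℝ} (hv : H *ᵥ v = (c : ℂ) • v) (hw : H *ᵥ w = (c : ℂ) • w) :
    Commute (vecMulVec v (star w)) H := by
  have hw' : star w ᵥ* H = (c : ℂ) • star w := by
    rw [← hH.eq, ← star_mulVec, hw, star_smul, Complex.star_def, Complex.conj_ofReal]
  rw [Commute, SemiconjBy, vecMulVec_mul, mul_vecMulVec, hw', hv, vecMulVec_smul, smul_vecMulVec]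

theorem commute_krausOp {H : Matrix n n ℂ} (hH : H.IsHermitian) {E : ι → ℝ} {χ : ι → n → ℂ}
    {φ : ι → κ → n → ℂ} (hχ : ∀ i, H *ᵥ χ i = (E i : ℂ) • χ i)
    (hφ : ∀ i k, H *ᵥ φ i k = (E i : ℂ) • φ i k) (k : κ) : Commute (krausOp χ φ k) H :=
  Commute.sum_left _ _ _ fun i _ => commute_vecMulVec_star_of_mulVec_eq_smul hH (hχ i) (hφ i k)

theorem conjTranspose_krausOp_mulVec (χ : ι → n → ℂ) (φ : ι → κ → n → ℂ) (k : κ) (ψ : n → ℂ) :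
    (krausOp χ φ k)ᴴ *ᵥ ψ = ∑ i, (star (χ i) ⬝ᵥ ψ) • φ i k := by
  simp only [krausOp, conjTranspose_sum, conjTranspose_vecMulVec, star_star, sum_mulVec,
    vecMulVec_mulVec, op_smul_eq_smul]

theorem dotProduct_sum_krausOp_mulVec [Fintype κ] (χ : ι → n → ℂ) (φ : ι → κ → n → ℂ)
    (ρ : Matrix n n ℂ) (ψ : n → ℂ) :
    star ψ ⬝ᵥ ((∑ k, krausOp χ φ k * ρ * (krausOp χ φ k)ᴴ) *ᵥ ψ) =
      ∑ i, ∑ j, (star ψ ⬝ᵥ χ i) * (star (χ j) ⬝ᵥ ψ) * ∑ k, star (φ i k) ⬝ᵥ (ρ *ᵥ φ j k) := by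
  have hk : ∀ k, star ψ ⬝ᵥ ((krausOp χ φ k * ρ * (krausOp χ φ k)ᴴ) *ᵥ ψ) =
      star ((krausOp χ φ k)ᴴ *ᵥ ψ) ⬝ᵥ (ρ *ᵥ ((krausOp χ φ k)ᴴ *ᵥ ψ)) := by
    intro k
    rw [← mulVec_mulVec, ← mulVec_mulVec, dotProduct_mulVec, star_mulVec, conjTranspose_conjTranspose]
  simp only [sum_mulVec, dotProduct_sum, hk, conjTranspose_krausOp_mulVec, star_sum, star_smul,
    mulVec_sum, mulVec_smul, sum_dotProduct, smul_dotProduct, dotProduct_smul, smul_eq_mul,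
    Finset.mul_sum]
  simp only [← star_dotProduct]
  rw [Finset.sum_comm]
  conv_rhs => rw [Finset.sum_comm]
  refine Finset.sum_congr rfl fun j _ => ?_
  rw [Finset.sum_comm]
  refine Finset.sum_congr rfl fun i _ => Finset.sum_congr rfl fun k _ => ?_
  ring

end Kraus

theorem stmt_15_general {d : ℕ} {ι : Type} [Fintype ι] [DecidableEq ι]
    (H : Matrix (Fin d) (Fin d) ℂ) (hH : H.IsHermitian)
    (E : ι → ℝ)
    (P : ι → Matrix (Fin d) (Fin d) ℂ)
    (hHerm : ∀ i, (P i).IsHermitian)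
    (hIdem : ∀ i, P i * P i = P i)
    (hOrth : ∀ i j, i ≠ j → P i * P j = 0)
    (hSum : ∑ i, P i = 1)
    (hSpec : H = ∑ i, (E i : ℂ) • P i)
    (ρ : Matrix (Fin d) (Fin d) ℂ)
    (ψ : Fin d → ℂ)
    (dE : ι → ℕ)
    (φb : (i : ι) → Fin (dE i) → (Fin d → ℂ))
    (hON : ∀ i, ∀ k l : Fin (dE i), star (φb i k) ⬝ᵥ φb i l = if k = l then 1 else 0)
    (hbasis : ∀ i, P i = ∑ k : Fin (dE i), vecMulVec (φb i k) (star (φb i k)))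
    (hvanish : ∀ i j, ∀ (k : Fin (dE i)) (l : Fin (dE j)),
      (min (dE i) (dE j) ≤ (k : ℕ) ∨ min (dE i) (dE j) ≤ (l : ℕ)) →
      star (φb i k) ⬝ᵥ (ρ *ᵥ φb j l) = 0)
    (hblock : ∀ i j, Matrix.PosSemidef (Matrix.of
      (fun (k l : Fin (min (dE i) (dE j))) =>
        star (φb i (Fin.castLE (min_le_left _ _) k)) ⬝ᵥ
          (ρ *ᵥ φb j (Fin.castLE (min_le_right _ _) l))))) :
    ∃ (K : ℕ) (M : Fin K → Matrix (Fin d) (Fin d) ℂ),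
      (∑ k, (M k)ᴴ * M k = 1) ∧ (∀ k, M k * H = H * M k) ∧
      star ψ ⬝ᵥ ((∑ k, M k * ρ * (M k)ᴴ) *ᵥ ψ) =
        ((∑ i, ∑ j, Real.sqrt (wt (P i) ψ * wt (P j) ψ) * traceNorm (P i * ρ * P j) : ℝ) : ℂ) := by
  have hPφ : ∀ i l, P i *ᵥ φb i l = φb i l := fun i l => by
    rw [hbasis i]
    exact IsOrthonormal.sum_vecMulVec_mulVec (hON i) l
  have hEig : ∀ i v, P i *ᵥ v = v → H *ᵥ v = (E i : ℂ) • v :=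
    fun _ _ => mulVec_eq_smul_of_mulVec_eq_self hOrth hSpec
  choose χ hχP hχ1 hψχ using fun i =>
    exists_mulVec_eq_self_dotProduct_eq_sqrt_wt (hHerm i) (hIdem i) ψ
  set N := Finset.univ.sup dE
  have hdN : ∀ i, dE i ≤ N := fun i => Finset.le_sup (Finset.mem_univ i)
  set φ : ι → Fin N → Fin d → ℂ := fun i => padZero N (φb i)
  refine ⟨N, krausOp χ φ, ?_, fun k => (commute_krausOp hH (fun i => hEig i _ (hχP i))
    (fun i k => hEig i _ (by rw [mulVec_padZero, funext (hPφ i)])) k).eq, ?_⟩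
  · rw [sum_conjTranspose_krausOp_mul_krausOp (φ := φ)
      (fun i j hij => dotProduct_eq_zero_of_mul_eq_zero (hHerm i) (hOrth i j hij) (hχP i) (hχP j))
      (fun i k hk => hχ1 i ⟨_, hPφ i ⟨k, lt_of_padZero_ne_zero hk⟩, by rw [hON i, if_pos rfl]⟩),
      ← hSum]
    refine Finset.sum_congr rfl fun i _ => ?_
    rw [hbasis i]
    exact sum_comp_padZero (hdN i) (φb i) (g := fun v => vecMulVec v (star v)) (by simp)
  · rw [dotProduct_sum_krausOp_mulVec]
    push_cast
    refine Finset.sum_congr rfl fun i _ => Finset.sum_congr rfl fun j _ => ?_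
    rw [hψχ i, star_dotProduct (χ j), hψχ j, Complex.star_def, Complex.conj_ofReal,
      sum_padZero_dotProduct_mulVec_eq_trace _ _ (min_le_left _ _) (min_le_right _ _)
        ((min_le_left _ _).trans (hdN i)) ρ (hvanish i j),
      ← ofReal_traceNorm_mul_mul_eq_trace (hON i) (hON j) _ _ (hbasis i) (hbasis j) (hvanish i j)
        (hblock i j), Real.sqrt_mul (wt_nonneg _ _)]
    push_cast
    ring

/-- **Achievability of the mixed-state fidelity bound for block positive states.** Let `H` be
Hermitian with spectral projections `P i` of rank `dE i`, `ρ` a density matrix, and `ψ` a unit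
vector with `q_E = ‖P_E ψ‖²`. Suppose `ρ` is block positive with respect to orthonormal bases
`φb i` of the eigenspaces: the matrix elements `⟨φb i k, ρ (φb j l)⟩` vanish whenever `k` or `l`
exceeds `min (dE i) (dE j)`, and the remaining square block is positive semidefinite. Then some
quantum channel with Kraus operators commuting with `H` attains
`⟨ψ|ℳ(ρ)|ψ⟩ = ∑_{E,E'} √(q_E q_{E'}) ‖P_E ρ P_{E'}‖₁`. -/
theorem stmt_15 {d : ℕ} {ι : Type} [Fintype ι] [DecidableEq ι]
    (H : Matrix (Fin d) (Fin d) ℂ) (hH : H.IsHermitian)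
    (E : ι → ℝ) (hE : Function.Injective E)
    (P : ι → Matrix (Fin d) (Fin d) ℂ)
    (hHerm : ∀ i, (P i).IsHermitian)
    (hIdem : ∀ i, P i * P i = P i)
    (hOrth : ∀ i j, i ≠ j → P i * P j = 0)
    (hSum : ∑ i, P i = 1)
    (hSpec : H = ∑ i, (E i : ℂ) • P i)
    (ρ : Matrix (Fin d) (Fin d) ℂ) (hρ : ρ.PosSemidef) (hρ1 : ρ.trace = 1)
    (ψ : Fin d → ℂ) (hψ : star ψ ⬝ᵥ ψ = 1)
    (dE : ι → ℕ)
    (φb : (i : ι) → Fin (dE i) → (Fin d → ℂ))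
    (hON : ∀ i, ∀ k l : Fin (dE i), star (φb i k) ⬝ᵥ φb i l = if k = l then 1 else 0)
    (hbasis : ∀ i, P i = ∑ k : Fin (dE i), vecMulVec (φb i k) (star (φb i k)))
    (hvanish : ∀ i j, ∀ (k : Fin (dE i)) (l : Fin (dE j)),
      (min (dE i) (dE j) ≤ (k : ℕ) ∨ min (dE i) (dE j) ≤ (l : ℕ)) →
      star (φb i k) ⬝ᵥ (ρ *ᵥ φb j l) = 0)
    (hblock : ∀ i j, Matrix.PosSemidef (Matrix.of
      (fun (k l : Fin (min (dE i) (dE j))) =>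
        star (φb i (Fin.castLE (min_le_left _ _) k)) ⬝ᵥ
          (ρ *ᵥ φb j (Fin.castLE (min_le_right _ _) l))))) :
    ∃ (K : ℕ) (M : Fin K → Matrix (Fin d) (Fin d) ℂ),
      (∑ k, (M k)ᴴ * M k = 1) ∧ (∀ k, M k * H = H * M k) ∧
      star ψ ⬝ᵥ ((∑ k, M k * ρ * (M k)ᴴ) *ᵥ ψ) =
        ((∑ i, ∑ j, Real.sqrt (wt (P i) ψ * wt (P j) ψ) * traceNorm (P i * ρ * P j) : ℝ) : ℂ) :=
  stmt_15_general H hH E P hHerm hIdem hOrth hSum hSpec ρ ψ dE φb hON hbasis hvanish hblock
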